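/- arXiv:1808.07994 — 8 statements merged into one kernel-verified Lean document; each statement's English description precedes it below -/
import Mathlib

section
/- If n is odd and T is any positive multiple of the multiplicative order of 2 modulo n, then (2^T/(2^T - 1)) · Σ_{i=0}^{T-1} (2^i mod n)/2^i is independent of the choice of such T. -/
/-!
The sequence `a i = 2 ^ i % n` is `T`-periodic whenever `ord_n(2) ∣ T`, and for a `T`-periodic
sequence splitting off the first period gives `S = ∑_{i<T} a i / 2 ^ i + S / 2 ^ T` for
`S = ∑' i, a i / 2 ^ i`. Hence both expressions equal `S`, which does not involve `T`.
-/

open Finset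

theorem Function.Periodic.norm_le_sum_range {E : Type*} [SeminormedAddCommGroup E] {f : ℕ → E}
    {T : ℕ} (hf : Function.Periodic f T) (hT : 0 < T) (i : ℕ) :
    ‖f i‖ ≤ ∑ j ∈ range T, ‖f j‖ := by
  rw [← hf.map_mod_nat]
  exact single_le_sum (fun j _ ↦ norm_nonneg (f j)) (mem_range.mpr (Nat.mod_lt i hT))

section PeriodicPowerSeries

variable {𝕜 : Type*} [NormedField 𝕜] [CompleteSpace 𝕜] {f : ℕ → 𝕜} {T : ℕ} {x : 𝕜}

theorem Function.Periodic.summable_mul_pow (hf : Function.Periodic f T) (hT : 0 < T)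
    (hx : ‖x‖ < 1) : Summable fun i ↦ f i * x ^ i := by
  refine .of_norm_bounded ((summable_geometric_of_lt_one (norm_nonneg x) hx).mul_left
    (∑ j ∈ range T, ‖f j‖)) fun i ↦ ?_
  rw [norm_mul, norm_pow]
  gcongr
  exact hf.norm_le_sum_range hT i

theorem Function.Periodic.tsum_mul_pow (hf : Function.Periodic f T) (hT : 0 < T)
    (hx : ‖x‖ < 1) :
    ∑' i, f i * x ^ i = (1 - x ^ T)⁻¹ * ∑ i ∈ range T, f i * x ^ i := by
  have hxT : 1 - x ^ T ≠ 0 := by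
    refine sub_ne_zero.mpr fun h ↦ ?_
    have := pow_lt_one₀ (norm_nonneg x) hx hT.ne'
    rw [← norm_pow, ← h, norm_one] at this
    exact this.false
  have hshift : ∑' i, f (i + T) * x ^ (i + T) = x ^ T * ∑' i, f i * x ^ i := by
    simp only [hf _, pow_add, ← tsum_mul_left]
    congr 1 with i
    ring
  have hsplit := (hf.summable_mul_pow hT hx).sum_add_tsum_nat_add T
  rw [hshift] at hsplit
  rw [eq_inv_mul_iff_mul_eq₀ hxT]
  linear_combination -hsplit

end PeriodicPowerSeries

theorem Nat.pow_mod_periodic {b n T : ℕ} (h : orderOf (b : ZMod n) ∣ T) :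
    Function.Periodic (fun i ↦ b ^ i % n) T := fun i ↦ by
  rw [← ZMod.natCast_eq_natCast_iff']
  push_cast
  rw [pow_add, orderOf_dvd_iff_pow_eq_one.mp h, mul_one]

theorem Function.Periodic.tsum_div_two_pow {a : ℕ → ℝ} {T : ℕ} (ha : Function.Periodic a T)
    (hT : 0 < T) :
    ∑' i, a i / 2 ^ i = (2 ^ T / (2 ^ T - 1)) * ∑ i ∈ range T, a i / 2 ^ i := by
  have hx : ‖(2⁻¹ : ℝ)‖ < 1 := by norm_num
  have hgeom : (1 - ((2 : ℝ) ^ T)⁻¹)⁻¹ = 2 ^ T / (2 ^ T - 1) := by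
    rw [← one_div ((2 : ℝ) ^ T), one_sub_div (by positivity), inv_div]
  simpa only [inv_pow, hgeom, ← div_eq_mul_inv] using ha.tsum_mul_pow hT hx

theorem expectation_indep_of_period_general (n : ℕ)
    (T₁ T₂ : ℕ) (hT₁ : 0 < T₁) (hT₂ : 0 < T₂)
    (h₁ : orderOf (2 : ZMod n) ∣ T₁) (h₂ : orderOf (2 : ZMod n) ∣ T₂) :
    (2 ^ T₁ / (2 ^ T₁ - 1)) * ∑ i ∈ Finset.range T₁, ((2 ^ i % n : ℕ) : ℝ) / 2 ^ i
      = (2 ^ T₂ / (2 ^ T₂ - 1)) * ∑ i ∈ Finset.range T₂, ((2 ^ i % n : ℕ) : ℝ) / 2 ^ i := by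
  have hper {T : ℕ} (h : orderOf (2 : ZMod n) ∣ T) :
      Function.Periodic (fun i ↦ ((2 ^ i % n : ℕ) : ℝ)) T := fun i ↦
    congrArg Nat.cast (Nat.pow_mod_periodic (b := 2) (by exact_mod_cast h) i)
  rw [← (hper h₁).tsum_div_two_pow hT₁, ← (hper h₂).tsum_div_two_pow hT₂]

theorem expectation_indep_of_period (n : ℕ) (hn : Odd n)
    (T₁ T₂ : ℕ) (hT₁ : 0 < T₁) (hT₂ : 0 < T₂)
    (h₁ : orderOf (2 : ZMod n) ∣ T₁) (h₂ : orderOf (2 : ZMod n) ∣ T₂) :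
    (2 ^ T₁ / (2 ^ T₁ - 1)) * ∑ i ∈ Finset.range T₁, ((2 ^ i % n : ℕ) : ℝ) / 2 ^ i
      = (2 ^ T₂ / (2 ^ T₂ - 1)) * ∑ i ∈ Finset.range T₂, ((2 ^ i % n : ℕ) : ℝ) / 2 ^ i :=
  expectation_indep_of_period_general n T₁ T₂ hT₁ hT₂ h₁ h₂
end

section
/- For odd n ≥ 3, the expected number of tosses of the bit-efficient scheme equals the infinite series Σ_{t=0}^{∞} (2^t mod n)/2^t, and this series equals (2^T/(2^T-1)) Σ_{i=0}^{T-1} (2^i mod n)/2^i where T = ord_n(2). -/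
/-! Since `n` is odd, `2` is a unit of `ZMod n`, so `t ↦ 2 ^ t % n` is periodic with period
`T = orderOf (2 : ZMod n) > 0`. For any power series `S = ∑ f t r ^ t` with `T`-periodic
coefficients, shifting by one period gives `S = ∑_{i<T} f i r ^ i + r ^ T S`; solving for `S`
with `r = 1/2` is the claim. -/

open Finset

namespace Function.Periodic

variable {𝕜 : Type*} [NormedField 𝕜] {f : ℕ → 𝕜} {T : ℕ}

theorem norm_le_sum_range_s6 (hf : Periodic f T) (hT : 0 < T) (t : ℕ) :
    ‖f t‖ ≤ ∑ i ∈ range T, ‖f i‖ := by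
  rw [← hf.map_mod_nat t]
  exact single_le_sum (fun i _ => norm_nonneg (f i)) (mem_range.mpr (Nat.mod_lt t hT))

variable [CompleteSpace 𝕜] {r : 𝕜}

theorem summable_mul_pow_s6 (hf : Periodic f T) (hT : 0 < T) (hr : ‖r‖ < 1) :
    Summable fun t => f t * r ^ t := by
  refine .of_norm_bounded ((summable_geometric_of_lt_one (norm_nonneg r) hr).mul_left
    (∑ i ∈ range T, ‖f i‖)) fun t => ?_
  rw [norm_mul, norm_pow]
  gcongr
  exact hf.norm_le_sum_range_s6 hT t

theorem tsum_mul_pow_s6 (hf : Periodic f T) (hT : 0 < T) (hr : ‖r‖ < 1) :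
    ∑' t, f t * r ^ t = (1 - r ^ T)⁻¹ * ∑ i ∈ range T, f i * r ^ i := by
  have hshift : ∑ i ∈ range T, f i * r ^ i + r ^ T * ∑' t, f t * r ^ t = ∑' t, f t * r ^ t := by
    rw [← tsum_mul_left]
    conv_rhs => rw [← (hf.summable_mul_pow_s6 hT hr).sum_add_tsum_nat_add T]
    refine congrArg _ (tsum_congr fun i => ?_)
    rw [hf i, pow_add]
    ring
  have hrT : r ^ T ≠ 1 := fun h => by
    have := congrArg norm h
    rw [norm_pow, norm_one] at this
    exact (pow_lt_one₀ (norm_nonneg r) hr hT.ne').ne this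
  rw [eq_inv_mul_iff_mul_eq₀ (sub_ne_zero.mpr hrT.symm)]
  linear_combination -hshift

end Function.Periodic

theorem periodic_pow_mod_orderOf (a n : ℕ) :
    Function.Periodic (fun t => a ^ t % n) (orderOf (a : ZMod n)) := fun t => by
  rw [← ZMod.natCast_eq_natCast_iff']
  push_cast
  rw [pow_add, pow_orderOf_eq_one, mul_one]

theorem orderOf_natCast_zmod_pos {a n : ℕ} (hn : n ≠ 0) (ha : a.Coprime n) :
    0 < orderOf (a : ZMod n) :=
  haveI : NeZero n := ⟨hn⟩
  ((ZMod.isUnit_iff_coprime a n).mpr ha).isOfFinOrder.orderOf_pos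

theorem expectation_series_eq_general (n : ℕ) (hn : Odd n) :
    (∑' t : ℕ, ((2 ^ t % n : ℕ) : ℝ) / 2 ^ t)
      = (2 ^ (orderOf (2 : ZMod n)) / (2 ^ (orderOf (2 : ZMod n)) - 1)) *
        ∑ i ∈ Finset.range (orderOf (2 : ZMod n)), ((2 ^ i % n : ℕ) : ℝ) / 2 ^ i := by
  set T := orderOf (2 : ZMod n)
  have hT : 0 < T := by
    have := orderOf_natCast_zmod_pos hn.pos.ne' (Nat.coprime_two_left.mpr hn)
    rwa [Nat.cast_ofNat] at this
  have hper : Function.Periodic (fun t => ((2 ^ t % n : ℕ) : ℝ)) T := by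
    simpa using (periodic_pow_mod_orderOf 2 n).comp (Nat.cast : ℕ → ℝ)
  have hhalf : ‖(2⁻¹ : ℝ)‖ < 1 := by norm_num
  simp only [div_eq_mul_inv, ← inv_pow]
  rw [hper.tsum_mul_pow_s6 hT hhalf, inv_pow]
  congr 1
  have h2T : (1 : ℝ) < 2 ^ T := one_lt_pow₀ one_lt_two hT.ne'
  field_simp

theorem expectation_series_eq (n : ℕ) (hn : Odd n) (hn3 : 3 ≤ n) :
    (∑' t : ℕ, ((2 ^ t % n : ℕ) : ℝ) / 2 ^ t)
      = (2 ^ (orderOf (2 : ZMod n)) / (2 ^ (orderOf (2 : ZMod n)) - 1)) *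
        ∑ i ∈ Finset.range (orderOf (2 : ZMod n)), ((2 ^ i % n : ℕ) : ℝ) / 2 ^ i :=
  expectation_series_eq_general n hn
end

section
/- For odd n ≥ 3 and any t ≥ 1, with c_t = 2^t mod n, the quantity 2·c_{t-1} - c_t is nonnegative, so Pr(t) = 2^(-t)(2c_{t-1} - c_t) defines a valid (nonnegative) probability of terminating at the t-th toss, and these probabilities sum to 1. -/
/-! Write `c_t = 2 ^ t % n`. Since `c_{t+1} = 2 c_t mod n ≤ 2 c_t`, the survival probability
`Pr(d > t) = c_t / 2 ^ t` is nonincreasing in `t`; it equals `1` at `t = 0` because `n > 1`, and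
tends to `0` because `c_t < n`. The termination probabilities are its consecutive differences, so
they are nonnegative and telescope to `1`. -/

open Filter Topology

theorem Nat.mul_mod_le_mul_mod (a b n : ℕ) : a * b % n ≤ a * (b % n) :=
  calc a * b % n = a * (b % n) % n := by rw [Nat.mul_mod_mod]
    _ ≤ a * (b % n) := Nat.mod_le _ _

theorem hasSum_sub_succ_of_antitone {f : ℕ → ℝ} {l : ℝ} (hf : Antitone f)
    (hl : Tendsto f atTop (𝓝 l)) : HasSum (fun t => f t - f (t + 1)) (f 0 - l) := by
  rw [hasSum_iff_tendsto_nat_of_nonneg fun t => sub_nonneg.2 (hf t.le_succ)]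
  simp only [Finset.sum_range_sub']
  exact tendsto_const_nhds.sub hl

noncomputable def survivalProb (n t : ℕ) : ℝ := ((2 ^ t % n : ℕ) : ℝ) / 2 ^ t

theorem survivalProb_zero {n : ℕ} (hn : 1 < n) : survivalProb n 0 = 1 := by
  simp [survivalProb, Nat.mod_eq_of_lt hn]

theorem survivalProb_sub_succ (n t : ℕ) : survivalProb n t - survivalProb n (t + 1) =
    (2 * ((2 ^ t % n : ℕ) : ℝ) - ((2 ^ (t + 1) % n : ℕ) : ℝ)) / 2 ^ (t + 1) := by
  rw [survivalProb, survivalProb, pow_succ]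
  field_simp
  ring

theorem antitone_survivalProb (n : ℕ) : Antitone (survivalProb n) := by
  refine antitone_nat_of_succ_le fun t => sub_nonneg.1 ?_
  rw [survivalProb_sub_succ]
  have hmod : 2 ^ (t + 1) % n ≤ 2 * (2 ^ t % n) := by
    rw [pow_succ']; exact Nat.mul_mod_le_mul_mod 2 (2 ^ t) n
  have : ((2 ^ (t + 1) % n : ℕ) : ℝ) ≤ 2 * ((2 ^ t % n : ℕ) : ℝ) := by exact_mod_cast hmod
  exact div_nonneg (by linarith) (by positivity)

theorem tendsto_survivalProb_atTop {n : ℕ} (hn : 0 < n) :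
    Tendsto (survivalProb n) atTop (𝓝 0) := by
  have hbound : Tendsto (fun t : ℕ => (n : ℝ) / 2 ^ t) atTop (𝓝 0) :=
    tendsto_const_nhds.div_atTop (tendsto_pow_atTop_atTop_of_one_lt one_lt_two)
  refine squeeze_zero (fun t => by unfold survivalProb; positivity) (fun t => ?_) hbound
  exact div_le_div_of_nonneg_right (by exact_mod_cast (Nat.mod_lt _ hn).le) (by positivity)

theorem termination_probabilities_general (n : ℕ) (hn3 : 3 ≤ n) :
    (∀ t : ℕ, 1 ≤ t → 2 ^ t % n ≤ 2 * (2 ^ (t - 1) % n)) ∧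
    (∑' t : ℕ, (2 * ((2 ^ t % n : ℕ) : ℝ) - ((2 ^ (t + 1) % n : ℕ) : ℝ)) / 2 ^ (t + 1)) = 1 := by
  constructor
  · intro t ht
    obtain ⟨s, rfl⟩ := Nat.exists_eq_add_of_le' ht
    simpa [pow_succ'] using Nat.mul_mod_le_mul_mod 2 (2 ^ s) n
  · simp_rw [← survivalProb_sub_succ]
    rw [(hasSum_sub_succ_of_antitone (antitone_survivalProb n)
      (tendsto_survivalProb_atTop (by omega))).tsum_eq, survivalProb_zero (by omega), sub_zero]

theorem termination_probabilities (n : ℕ) (hn : Odd n) (hn3 : 3 ≤ n) :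
    (∀ t : ℕ, 1 ≤ t → 2 ^ t % n ≤ 2 * (2 ^ (t - 1) % n)) ∧
    (∑' t : ℕ, (2 * ((2 ^ t % n : ℕ) : ℝ) - ((2 ^ (t + 1) % n : ℕ) : ℝ)) / 2 ^ (t + 1)) = 1 :=
  termination_probabilities_general n hn3
end

section
/- Let k ≥ 1 and n = F_{2k+1}/3 = (2^(2k+1)+1)/3. Then n is an integer, 2^(2k+1) ≡ 2 (mod n-1), and 2^(2k+1) ≡ n-1 (mod n). -/
/-! Write `p = 2 ^ (2k+1)`. Since `2k+1` is odd, `2 + 1 ∣ 2 ^ (2k+1) + 1 ^ (2k+1)`, so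
`3n = p + 1`. Then `p + 1 ≡ 0 (mod n)` gives `p ≡ n - 1`, and `n ≡ 1 (mod n - 1)` gives
`p + 1 = 3n ≡ 3`, i.e. `p ≡ 2 (mod n - 1)`. -/

theorem three_dvd_two_pow_add_one_of_odd {e : ℕ} (he : Odd e) : 3 ∣ 2 ^ e + 1 := by
  simpa using Odd.nat_add_dvd_pow_add_pow 2 1 he

namespace Nat

theorem modEq_sub_one_of_dvd_add_one {m n : ℕ} (h : n ∣ m + 1) : m ≡ n - 1 [MOD n] := by
  have hn : 1 ≤ n := pos_of_dvd_of_pos h m.succ_pos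
  refine ModEq.add_right_cancel' 1 ?_
  rw [Nat.sub_add_cancel hn]
  exact (modEq_zero_iff_dvd.2 h).trans (modEq_zero_iff_dvd.2 dvd_rfl).symm

theorem add_one_modEq_of_mul_eq_add_one {c m n : ℕ} (h : c * n = m + 1) :
    m + 1 ≡ c [MOD n - 1] := by
  have hn : 1 ≤ n := Nat.pos_of_ne_zero (by rintro rfl; omega)
  rw [← h]
  simpa using (modEq_sub hn).mul_left c

end Nat

theorem first_mersenne_peak_general (k : ℕ) (n : ℕ)
    (hn : n = (2 ^ (2 * k + 1) + 1) / 3) :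
    3 ∣ 2 ^ (2 * k + 1) + 1 ∧
    2 ^ (2 * k + 1) ≡ 2 [MOD n - 1] ∧
    2 ^ (2 * k + 1) ≡ n - 1 [MOD n] := by
  have h3 : 3 ∣ 2 ^ (2 * k + 1) + 1 := three_dvd_two_pow_add_one_of_odd (odd_two_mul_add_one k)
  have h3n : 3 * n = 2 ^ (2 * k + 1) + 1 := by rw [hn, Nat.mul_div_cancel' h3]
  exact ⟨h3, Nat.ModEq.add_right_cancel' 1 (Nat.add_one_modEq_of_mul_eq_add_one h3n),
    Nat.modEq_sub_one_of_dvd_add_one (Dvd.intro_left 3 h3n)⟩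

theorem first_mersenne_peak (k : ℕ) (hk : 1 ≤ k) (n : ℕ)
    (hn : n = (2 ^ (2 * k + 1) + 1) / 3) :
    3 ∣ 2 ^ (2 * k + 1) + 1 ∧
    2 ^ (2 * k + 1) ≡ 2 [MOD n - 1] ∧
    2 ^ (2 * k + 1) ≡ n - 1 [MOD n] :=
  first_mersenne_peak_general k n hn
end

section
/- Let s, k ≥ 1 and n = F_{s(2k+1)}/F_s. Then n is an integer, 2^(s(2k+1)) ≡ 2^s (mod n-1), and 2^(s(2k+1)) ≡ n-1 (mod n). -/
/-!
Put `a = 2 ^ s`, `m = 2k + 1`. Since `m` is odd, `a + 1 ∣ a ^ m + 1`, and the quotient `n`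
satisfies `a ^ m + 1 = n (a + 1) = (n - 1)(a + 1) + (a + 1)`. Reading this identity modulo `n - 1`
and modulo `n` and cancelling the `+ 1` gives `a ^ m ≡ a` and `a ^ m ≡ -1 ≡ n - 1`.
-/

namespace Nat

variable {a m n : ℕ}

theorem succ_dvd_pow_add_one_of_odd (a : ℕ) (hm : Odd m) : a + 1 ∣ a ^ m + 1 := by
  simpa using Odd.nat_add_dvd_pow_add_pow a 1 hm

theorem pow_modEq_self_of_mul_succ_eq (h : n * (a + 1) = a ^ m + 1) : a ^ m ≡ a [MOD n - 1] := by
  obtain ⟨c, rfl⟩ : ∃ c, n = c + 1 := exists_eq_succ_of_ne_zero (by rintro rfl; omega)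
  have hsplit : a ^ m + 1 = (a + 1) + c * (a + 1) := by rw [← h]; ring
  refine Nat.ModEq.add_right_cancel' 1 ?_
  rw [Nat.add_sub_cancel, hsplit]
  exact add_mul_mod_self_left (a + 1) c (a + 1)

theorem pow_modEq_pred_of_mul_succ_eq (h : n * (a + 1) = a ^ m + 1) : a ^ m ≡ n - 1 [MOD n] := by
  obtain ⟨c, rfl⟩ : ∃ c, n = c + 1 := exists_eq_succ_of_ne_zero (by rintro rfl; omega)
  refine Nat.ModEq.add_right_cancel' 1 ?_
  rw [Nat.add_sub_cancel, ← h]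
  exact (mul_mod_right (c + 1) (a + 1)).trans (mod_self (c + 1)).symm

end Nat

theorem mersenne_peak_congruences_general (s k : ℕ) (n : ℕ)
    (hn : n = (2 ^ (s * (2 * k + 1)) + 1) / (2 ^ s + 1)) :
    (2 ^ s + 1) ∣ (2 ^ (s * (2 * k + 1)) + 1) ∧
    2 ^ (s * (2 * k + 1)) ≡ 2 ^ s [MOD n - 1] ∧
    2 ^ (s * (2 * k + 1)) ≡ n - 1 [MOD n] := by
  rw [pow_mul] at hn ⊢
  have hdvd := Nat.succ_dvd_pow_add_one_of_odd (2 ^ s) (odd_two_mul_add_one k)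
  have hquot : n * (2 ^ s + 1) = (2 ^ s) ^ (2 * k + 1) + 1 := hn ▸ Nat.div_mul_cancel hdvd
  exact ⟨hdvd, Nat.pow_modEq_self_of_mul_succ_eq hquot, Nat.pow_modEq_pred_of_mul_succ_eq hquot⟩

theorem mersenne_peak_congruences (s k : ℕ) (hs : 1 ≤ s) (hk : 1 ≤ k) (n : ℕ)
    (hn : n = (2 ^ (s * (2 * k + 1)) + 1) / (2 ^ s + 1)) :
    (2 ^ s + 1) ∣ (2 ^ (s * (2 * k + 1)) + 1) ∧
    2 ^ (s * (2 * k + 1)) ≡ 2 ^ s [MOD n - 1] ∧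
    2 ^ (s * (2 * k + 1)) ≡ n - 1 [MOD n] :=
  mersenne_peak_congruences_general s k n hn
end

section
/- For odd n ≥ 3, the expectation e[n] = Σ_{t=0}^{∞} (2^t mod n)/2^t satisfies ⌈log₂ n⌉ ≤ e[n] < ⌈log₂ n⌉ + 1. -/
/-!
After `t` tosses, `2 ^ t % n` of the `2 ^ t` equally likely outcomes are still undecided, so
the `t`-th summand of `e[n]` is the probability that more than `t` tosses are needed. With
`k = ⌈log₂ n⌉` the first `k` summands equal `1`, giving the lower bound. Since
`n ≤ 2 ^ k < 2 n`, the `k`-th summand is `(2 ^ k - n) / 2 ^ k`, and bounding every later residue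
by `n - 1` makes the tail at most `(n - 1) / 2 ^ k`; altogether `e[n] ≤ k + 1 - 2 ^ (-k) < k + 1`.
-/

open Finset

namespace Nat

theorem pow_clog_lt_two_mul {n : ℕ} (hn : 0 < n) : 2 ^ clog 2 n < 2 * n := by
  rcases h : clog 2 n with _ | j
  · omega
  · have : 2 ^ j < n := (lt_clog_iff_pow_lt one_lt_two).1 (by omega)
    rw [pow_succ]
    omega

end Nat

noncomputable def undecidedProb (n t : ℕ) : ℝ := ((2 ^ t % n : ℕ) : ℝ) / 2 ^ t

namespace undecidedProb

variable {n : ℕ}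

theorem nonneg (t : ℕ) : 0 ≤ undecidedProb n t := by
  unfold undecidedProb
  positivity

theorem le_div_pow (hn : 0 < n) (t : ℕ) : undecidedProb n t ≤ ((n : ℝ) - 1) / 2 ^ t := by
  have hmod : ((2 ^ t % n : ℕ) : ℝ) + 1 ≤ n := by exact_mod_cast Nat.mod_lt _ hn
  unfold undecidedProb
  gcongr
  linarith

theorem summable (hn : 0 < n) : Summable (undecidedProb n) := by
  refine Summable.of_nonneg_of_le nonneg (le_div_pow hn) ?_
  simpa [div_eq_mul_inv, ← inv_pow] using
    (summable_geometric_of_lt_one (by norm_num) (by norm_num : (2 : ℝ)⁻¹ < 1)).mul_left _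

theorem eq_one_of_pow_lt {t : ℕ} (ht : 2 ^ t < n) : undecidedProb n t = 1 := by
  rw [undecidedProb, Nat.mod_eq_of_lt ht]
  push_cast
  field_simp

theorem eq_of_le_pow_of_pow_lt_two_mul {t : ℕ} (h₁ : n ≤ 2 ^ t) (h₂ : 2 ^ t < 2 * n) :
    undecidedProb n t = ((2 : ℝ) ^ t - n) / 2 ^ t := by
  have hmod : 2 ^ t % n = 2 ^ t - n := by
    rw [Nat.mod_eq_sub_mod h₁, Nat.mod_eq_of_lt (by omega)]
  rw [undecidedProb, hmod, Nat.cast_sub h₁]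
  push_cast
  rfl

theorem sum_range_clog :
    ∑ t ∈ range (Nat.clog 2 n), undecidedProb n t = Nat.clog 2 n := by
  rw [sum_congr rfl fun t ht => eq_one_of_pow_lt ((Nat.lt_clog_iff_pow_lt one_lt_two).1
    (mem_range.1 ht))]
  simp

theorem tsum_add_succ_le (hn : 0 < n) (m : ℕ) :
    ∑' i, undecidedProb n (i + (m + 1)) ≤ ((n : ℝ) - 1) / 2 ^ m := by
  have hgeom : ∀ i, ((n : ℝ) - 1) / 2 ^ (i + (m + 1)) = ((n - 1) / 2 ^ m) / 2 / 2 ^ i := by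
    intro i
    rw [pow_add, pow_succ]
    field_simp
  calc ∑' i, undecidedProb n (i + (m + 1))
      ≤ ∑' i, ((n : ℝ) - 1) / 2 ^ m / 2 / 2 ^ i :=
        Summable.tsum_le_tsum (fun i => (le_div_pow hn _).trans_eq (hgeom i))
          ((summable_nat_add_iff _).2 (summable hn)) (summable_geometric_two' _)
    _ = ((n : ℝ) - 1) / 2 ^ m := tsum_geometric_two' _

end undecidedProb

open undecidedProb in
theorem expectation_bounds_general (n : ℕ) (hn3 : 3 ≤ n) :
    (Nat.clog 2 n : ℝ) ≤ (∑' t : ℕ, ((2 ^ t % n : ℕ) : ℝ) / 2 ^ t) ∧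
    (∑' t : ℕ, ((2 ^ t % n : ℕ) : ℝ) / 2 ^ t) < Nat.clog 2 n + 1 := by
  change (Nat.clog 2 n : ℝ) ≤ ∑' t, undecidedProb n t ∧
    ∑' t, undecidedProb n t < Nat.clog 2 n + 1
  have hn0 : 0 < n := by omega
  set k := Nat.clog 2 n
  have hk : n ≤ 2 ^ k := Nat.le_pow_clog one_lt_two n
  have hsplit := (summable hn0).sum_add_tsum_nat_add (k + 1)
  rw [sum_range_succ, sum_range_clog,
    eq_of_le_pow_of_pow_lt_two_mul hk (Nat.pow_clog_lt_two_mul hn0)] at hsplit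
  refine ⟨?_, ?_⟩
  · rw [← sum_range_clog]
    exact (summable hn0).sum_le_tsum _ fun t _ => nonneg t
  · have htail := tsum_add_succ_le hn0 k
    have hpos : (0 : ℝ) < 2 ^ k := by positivity
    calc ∑' t, undecidedProb n t ≤ k + ((2 : ℝ) ^ k - n) / 2 ^ k + (n - 1) / 2 ^ k := by
          linarith
      _ = k + 1 - 1 / 2 ^ k := by field_simp; ring
      _ < k + 1 := by linarith [one_div_pos.2 hpos]

theorem expectation_bounds (n : ℕ) (hn : Odd n) (hn3 : 3 ≤ n) :
    (Nat.clog 2 n : ℝ) ≤ (∑' t : ℕ, ((2 ^ t % n : ℕ) : ℝ) / 2 ^ t) ∧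
    (∑' t : ℕ, ((2 ^ t % n : ℕ) : ℝ) / 2 ^ t) < Nat.clog 2 n + 1 :=
  expectation_bounds_general n hn3
end

section
/- For m ≥ 1 and the Fermat number n = F_m = 2^m + 1, the expectation e[F_m] = Σ_{t=0}^{∞} (2^t mod F_m)/2^t equals 2 + m·2^m/F_m = 2 + ((n-1)/n)·log₂(n-1). -/
/-!
Write `r t = 2 ^ t % n` for `n = 2 ^ m + 1`. Since `2 ^ m ≡ -1 [MOD n]` and `n` is odd, the
residues are antiperiodic: `r (t + m) = n - r t`. Splitting off the first `m` terms (where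
`r t = 2 ^ t`, each contributing `1`) turns the series `S = ∑ r t / 2 ^ t` into the linear
equation `(1 + 2⁻ᵐ) S = m + 2 n / 2 ^ m`, whose solution is `2 + m 2 ^ m / n`.
-/

open Finset

theorem Nat.mod_eq_sub_mod_of_dvd_add {n a b : ℕ} (hab : n ∣ a + b) (hb : ¬ n ∣ b) :
    a % n = n - b % n := by
  have hb0 : 0 < b % n := Nat.pos_of_ne_zero fun h => hb (Nat.dvd_of_mod_eq_zero h)
  have hn : n ≠ 0 := by
    rintro rfl
    exact hb (by simp_all)
  have hlt : n - b % n < n := by omega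
  have hmod : a ≡ n - b % n [MOD n] := by
    refine Nat.ModEq.add_right_cancel' (b % n) ?_
    calc a + b % n ≡ a + b [MOD n] := (Nat.mod_modEq b n).add_left a
      _ ≡ 0 [MOD n] := (Nat.modEq_zero_iff_dvd).2 hab
      _ ≡ n - b % n + b % n [MOD n] := by
        rw [Nat.sub_add_cancel (Nat.mod_lt b (Nat.pos_of_ne_zero hn)).le]
        exact (Nat.modEq_zero_iff_dvd.2 dvd_rfl).symm
  rw [hmod, Nat.mod_eq_of_lt hlt]

theorem two_pow_mod_fermat_of_lt {m t : ℕ} (ht : t < m) : 2 ^ t % (2 ^ m + 1) = 2 ^ t :=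
  Nat.mod_eq_of_lt <| (Nat.pow_lt_pow_right one_lt_two ht).trans (Nat.lt_succ_self _)

theorem two_pow_add_mod_fermat {m : ℕ} (hm : 1 ≤ m) (t : ℕ) :
    2 ^ (t + m) % (2 ^ m + 1) = 2 ^ m + 1 - 2 ^ t % (2 ^ m + 1) := by
  refine Nat.mod_eq_sub_mod_of_dvd_add ⟨2 ^ t, by ring⟩ fun hdvd => ?_
  have hodd : Odd (2 ^ m + 1) := (Nat.even_pow.2 ⟨even_two, by omega⟩).add_one
  have hcop : Nat.Coprime (2 ^ m + 1) (2 ^ t) := (Nat.coprime_two_left.2 hodd).pow_left t |>.symm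
  have := hcop.eq_one_of_dvd hdvd
  have := Nat.one_le_two_pow (n := m)
  omega

theorem summable_natCast_mod_div_two_pow (a : ℕ → ℕ) {n : ℕ} (hn : 0 < n) :
    Summable fun t => ((a t % n : ℕ) : ℝ) / 2 ^ t := by
  refine Summable.of_nonneg_of_le (fun t => by positivity) (fun t => ?_)
    (summable_geometric_two.mul_left (n : ℝ))
  rw [one_div, inv_pow, ← div_eq_mul_inv]
  gcongr
  exact_mod_cast (Nat.mod_lt _ hn).le

theorem one_add_pow_mul_tsum_of_antiperiodic {f : ℕ → ℝ} {x c : ℝ} {m : ℕ}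
    (hf : Summable fun t => f t * x ^ t) (hx : |x| < 1) (hanti : ∀ t, f (t + m) = c - f t) :
    (1 + x ^ m) * ∑' t, f t * x ^ t = ∑ t ∈ range m, f t * x ^ t + c * x ^ m / (1 - x) := by
  have hgeom : Summable fun t => c * x ^ t := (summable_geometric_of_abs_lt_one hx).mul_left c
  have htail : ∑' t, f (t + m) * x ^ (t + m) = x ^ m * (c / (1 - x) - ∑' t, f t * x ^ t) := by
    have hshift (t : ℕ) : f (t + m) * x ^ (t + m) = x ^ m * (c * x ^ t - f t * x ^ t) := by
      rw [hanti, pow_add]; ring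
    rw [tsum_congr hshift, tsum_mul_left, hgeom.tsum_sub hf, tsum_mul_left,
      tsum_geometric_of_abs_lt_one hx, div_eq_mul_inv]
  have hsplit := hf.sum_add_tsum_nat_add m
  rw [htail] at hsplit
  linear_combination -hsplit

theorem tsum_two_pow_mod_fermat {m : ℕ} (hm : 1 ≤ m) :
    ∑' t : ℕ, ((2 ^ t % (2 ^ m + 1) : ℕ) : ℝ) / 2 ^ t = 2 + m * 2 ^ m / (2 ^ m + 1) := by
  set n := 2 ^ m + 1 with hn
  have hterm (t : ℕ) :
      ((2 ^ t % n : ℕ) : ℝ) / 2 ^ t = (2 ^ t % n : ℕ) * (1 / 2 : ℝ) ^ t := by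
    rw [one_div, inv_pow, div_eq_mul_inv]
  have hanti (t : ℕ) : ((2 ^ (t + m) % n : ℕ) : ℝ) = n - (2 ^ t % n : ℕ) := by
    rw [two_pow_add_mod_fermat hm, Nat.cast_sub (Nat.mod_lt _ (Nat.succ_pos _)).le]
  have hinit : ∑ t ∈ range m, ((2 ^ t % n : ℕ) : ℝ) * (1 / 2) ^ t = m := by
    rw [Finset.sum_congr rfl fun t ht => by
      rw [two_pow_mod_fermat_of_lt (mem_range.1 ht), Nat.cast_pow, Nat.cast_ofNat, ← mul_pow,
        mul_one_div_cancel two_ne_zero, one_pow]]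
    simp
  have hsum := summable_natCast_mod_div_two_pow (fun t => 2 ^ t) (n := n) (Nat.succ_pos _)
  simp_rw [hterm] at hsum ⊢
  have key := one_add_pow_mul_tsum_of_antiperiodic hsum (by norm_num [abs_of_pos]) hanti
  rw [hinit] at key
  have hnR : (n : ℝ) = 2 ^ m + 1 := by rw [hn]; push_cast; ring
  rw [hnR, one_div_pow] at key
  field_simp at key ⊢
  linear_combination key

theorem fermat_peak_value (m : ℕ) (hm : 1 ≤ m) (n : ℕ) (hn : n = 2 ^ m + 1) :
    (∑' t : ℕ, ((2 ^ t % n : ℕ) : ℝ) / 2 ^ t) = 2 + m * 2 ^ m / n ∧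
    (2 : ℝ) + m * 2 ^ m / n = 2 + (((n : ℝ) - 1) / n) * Real.logb 2 (n - 1) := by
  subst hn
  refine ⟨by exact_mod_cast tsum_two_pow_mod_fermat hm, ?_⟩
  have hlog : Real.logb 2 (((2 ^ m + 1 : ℕ) : ℝ) - 1) = m := by
    push_cast
    rw [add_sub_cancel_right, Real.logb_pow, Real.logb_self_eq_one one_lt_two, mul_one]
  rw [hlog]
  push_cast
  ring
end

section
/- For s, k ≥ 1 with a = F_s and b = F_{s(2k+1)}/F_s (so ab = F_{s(2k+1)}), the expectations satisfy e[a] + e[b] - e[ab] = 2/F_s, where e[F_m] = 2 + m·2^m/F_m and e[F_{s(2k+1)}/F_s] = 2sk + (s+2)/F_s - s(2k+1)/F_{s(2k+1)}. -/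
/-! Writing `m·2^m/F_m = m - m/F_m`, every term `m/F_m` with `m = s(2k+1)` cancels and the terms
`s/F_s` combine with `(s+2)/F_s`, leaving `s + 2sk - s(2k+1) + 2/F_s = 2/F_s`. -/

theorem mul_div_add_one_add_div_add_one {K : Type*} [DivisionRing K] (x y : K) (hy : y + 1 ≠ 0) :
    x * y / (y + 1) + x / (y + 1) = x := by
  rw [← add_div, ← mul_add_one, mul_div_cancel_right₀ x hy]

theorem subadditivity_witness_general (s k : ℕ) :
    ((2 : ℚ) + s * 2 ^ s / (2 ^ s + 1))
      + (2 * s * k + ((s : ℚ) + 2) / (2 ^ s + 1)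
          - (s : ℚ) * (2 * k + 1) / (2 ^ (s * (2 * k + 1)) + 1))
      - ((2 : ℚ) + (s * (2 * k + 1) : ℚ) * 2 ^ (s * (2 * k + 1)) / (2 ^ (s * (2 * k + 1)) + 1))
      = 2 / (2 ^ s + 1) := by
  have hF_s := mul_div_add_one_add_div_add_one (s : ℚ) (2 ^ s) (by positivity)
  have hF_ab := mul_div_add_one_add_div_add_one ((s : ℚ) * (2 * k + 1)) (2 ^ (s * (2 * k + 1)))
    (by positivity)
  linear_combination hF_s - hF_ab

theorem subadditivity_witness (s k : ℕ) (hs : 1 ≤ s) (hk : 1 ≤ k) :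
    ((2 : ℚ) + s * 2 ^ s / (2 ^ s + 1))
      + (2 * s * k + ((s : ℚ) + 2) / (2 ^ s + 1)
          - (s : ℚ) * (2 * k + 1) / (2 ^ (s * (2 * k + 1)) + 1))
      - ((2 : ℚ) + (s * (2 * k + 1) : ℚ) * 2 ^ (s * (2 * k + 1)) / (2 ^ (s * (2 * k + 1)) + 1))
      = 2 / (2 ^ s + 1) :=
  subadditivity_witness_general s k
end
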